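/- Suppose Var_{x∼U(X)}[v·x] ≥ α‖v‖₂² for every v ∈ ℝ^d, where α > 0, and suppose ‖c‖₂ ≤ C₁. Let Z be the closed ball in ℝ^d of radius B = 2C₁/λ centered at the origin, and assume 0 < ρ ≤ min{1/(2BD), α/(12BD³)}. Then the regularized loss L_λ is γ-quasar-convex with respect to the point −c/λ on Z with γ = βρα/(4D²); that is, for every w ∈ Z, ∇L_λ(w)·(w + c/λ) ≥ (βρα/(4D²))·(L_λ(w) − L_λ(−c/λ)). -/

import Mathlib

open Finset
open scoped InnerProductSpace BigOperators

noncomputable section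

/-- The Gibbs distribution on a finite set `X ⊆ ℝ^d` with parameter `w`:
`φ(x; w) = exp(w·x) / ∑_{y ∈ X} exp(w·y)`. -/
def gibbs {d : ℕ} (X : Finset (EuclideanSpace ℝ (Fin d)))
    (w x : EuclideanSpace ℝ (Fin d)) : ℝ :=
  Real.exp ⟪w, x⟫_ℝ / ∑ y ∈ X, Real.exp ⟪w, y⟫_ℝ

/-- Expectation of a real function under the Gibbs distribution. -/
def gibbsExp {d : ℕ} (X : Finset (EuclideanSpace ℝ (Fin d)))
    (w : EuclideanSpace ℝ (Fin d)) (f : EuclideanSpace ℝ (Fin d) → ℝ) : ℝ :=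
  ∑ x ∈ X, gibbs X w x * f x

/-- Variance of a real function under the Gibbs distribution. -/
def gibbsVar {d : ℕ} (X : Finset (EuclideanSpace ℝ (Fin d)))
    (w : EuclideanSpace ℝ (Fin d)) (f : EuclideanSpace ℝ (Fin d) → ℝ) : ℝ :=
  gibbsExp X w (fun x => f x ^ 2) - (gibbsExp X w f) ^ 2

/-- Mean (a vector) of the Gibbs distribution. -/
def gibbsMean {d : ℕ} (X : Finset (EuclideanSpace ℝ (Fin d)))
    (w : EuclideanSpace ℝ (Fin d)) : EuclideanSpace ℝ (Fin d) :=
  ∑ x ∈ X, gibbs X w x • x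

/-- The negative entropy `H(w) = E_{x ∼ φ(·;w)}[log φ(x;w)]`. -/
def negEnt {d : ℕ} (X : Finset (EuclideanSpace ℝ (Fin d)))
    (w : EuclideanSpace ℝ (Fin d)) : ℝ :=
  ∑ x ∈ X, gibbs X w x * Real.log (gibbs X w x)


/-- The fast/slow mixture generator `p(x;w) = (1−β)φ(x;w) + βφ(x;ρw)`. -/
def pmix {d : ℕ} (X : Finset (EuclideanSpace ℝ (Fin d))) (β ρ : ℝ)
    (w x : EuclideanSpace ℝ (Fin d)) : ℝ :=
  (1 - β) * gibbs X w x + β * gibbs X (ρ • w) x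

/-- The regularizer `R(w) = (1−β)H(w) + (β/ρ)H(ρw)`. -/
def reg {d : ℕ} (X : Finset (EuclideanSpace ℝ (Fin d))) (β ρ : ℝ)
    (w : EuclideanSpace ℝ (Fin d)) : ℝ :=
  (1 - β) * negEnt X w + (β / ρ) * negEnt X (ρ • w)

/-- The regularized loss `L_λ(w) = E_{x∼p(·;w)}[c·x] + λ R(w)`. -/
def rloss {d : ℕ} (X : Finset (EuclideanSpace ℝ (Fin d))) (β ρ lam : ℝ)
    (c w : EuclideanSpace ℝ (Fin d)) : ℝ :=
  (∑ x ∈ X, pmix X β ρ w x * ⟪c, x⟫_ℝ) + lam * reg X β ρ w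

/-- Mean (a vector) of the uniform distribution on `X`. -/
def unifMean {d : ℕ} (X : Finset (EuclideanSpace ℝ (Fin d))) : EuclideanSpace ℝ (Fin d) :=
  (X.card : ℝ)⁻¹ • ∑ x ∈ X, x

/-- Expectation of a real function under the uniform distribution on `X`. -/
def unifExp {d : ℕ} (X : Finset (EuclideanSpace ℝ (Fin d)))
    (f : EuclideanSpace ℝ (Fin d) → ℝ) : ℝ :=
  (X.card : ℝ)⁻¹ * ∑ x ∈ X, f x

/-- Variance of a real function under the uniform distribution on `X`. -/
def unifVar {d : ℕ} (X : Finset (EuclideanSpace ℝ (Fin d)))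
    (f : EuclideanSpace ℝ (Fin d) → ℝ) : ℝ :=
  unifExp X (fun x => f x ^ 2) - (unifExp X f) ^ 2

/-! Put `v = w + c/λ` and follow the segment `p(s) = -c/λ + s v`. Since `c + λ p(s) = λ s v` is
parallel to the segment, the slope of `L_λ` along it is
`λ s [(1-β) Var_{φ(·;p)}⟪v,x⟫ + βρ Var_{φ(·;ρp)}⟪v,x⟫]`, and at `s = 1` it is `⟪∇L_λ(w), v⟫`.
Both variances are at most `D²‖v‖²`, so by the mean value theorem
`L_λ(w) - L_λ(-c/λ) ≤ λ D² ‖v‖²`. On the ball, `|⟪ρw, x⟫| ≤ 1/2`, so every weight of `φ(·;ρw)` is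
at least `e⁻¹/|X|` and its variance of `⟪v,x⟫` is at least `e⁻¹ α ‖v‖² ≥ α ‖v‖²/4`; hence
`⟪∇L_λ(w), v⟫ ≥ λβρα‖v‖²/4 ≥ (βρα/(4D²)) (L_λ(w) - L_λ(-c/λ))`. -/

open Real

theorem sum_mul_sub_sq_of_sum_eq_one {ι : Type*} {s : Finset ι} {q : ι → ℝ}
    (hq : ∑ i ∈ s, q i = 1) (f : ι → ℝ) (m : ℝ) :
    ∑ i ∈ s, q i * (f i - m) ^ 2
      = (∑ i ∈ s, q i * f i ^ 2 - (∑ i ∈ s, q i * f i) ^ 2) + (∑ i ∈ s, q i * f i - m) ^ 2 := by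
  have h : ∀ i ∈ s, q i * (f i - m) ^ 2 = q i * f i ^ 2 - 2 * m * (q i * f i) + m ^ 2 * q i :=
    fun i _ => by ring
  rw [sum_congr rfl h, sum_add_distrib, sum_sub_distrib, ← mul_sum, ← mul_sum, hq]
  ring

theorem hasDerivAt_line {F : Type*} [NormedAddCommGroup F] [NormedSpace ℝ F] (u t : F) (s : ℝ) :
    HasDerivAt (fun s : ℝ => u + s • t) t s := by
  simpa using ((hasDerivAt_id s).smul_const t).const_add u

theorem inner_gradient_eq_of_hasDerivAt_comp {F : Type*} [NormedAddCommGroup F]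
    [InnerProductSpace ℝ F] [CompleteSpace F] {f : F → ℝ} {γ : ℝ → F} {γ' : F} {s f' : ℝ}
    (hγ : HasDerivAt γ γ' s) (hf : DifferentiableAt ℝ f (γ s))
    (h : HasDerivAt (fun s => f (γ s)) f' s) :
    ⟪gradient f (γ s), γ'⟫_ℝ = f' := by
  rw [inner_gradient_left]
  exact (hf.hasFDerivAt.comp_hasDerivAt s hγ).unique h

section Gibbs

variable {d : ℕ} {X : Finset (EuclideanSpace ℝ (Fin d))}

def partitionFn (X : Finset (EuclideanSpace ℝ (Fin d))) (w : EuclideanSpace ℝ (Fin d)) : ℝ :=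
  ∑ y ∈ X, exp ⟪w, y⟫_ℝ

def gibbsCov (X : Finset (EuclideanSpace ℝ (Fin d))) (w : EuclideanSpace ℝ (Fin d))
    (f g : EuclideanSpace ℝ (Fin d) → ℝ) : ℝ :=
  gibbsExp X w (fun x => f x * g x) - gibbsExp X w f * gibbsExp X w g

theorem partitionFn_pos (hX : X.Nonempty) (w : EuclideanSpace ℝ (Fin d)) :
    0 < partitionFn X w :=
  sum_pos (fun _ _ => exp_pos _) hX

theorem gibbs_eq (w x : EuclideanSpace ℝ (Fin d)) :
    gibbs X w x = exp ⟪w, x⟫_ℝ / partitionFn X w :=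
  rfl

theorem gibbs_pos (hX : X.Nonempty) (w x : EuclideanSpace ℝ (Fin d)) : 0 < gibbs X w x :=
  div_pos (exp_pos _) (partitionFn_pos hX w)

theorem sum_gibbs (hX : X.Nonempty) (w : EuclideanSpace ℝ (Fin d)) :
    ∑ x ∈ X, gibbs X w x = 1 := by
  simp only [gibbs_eq, ← sum_div]
  exact div_self (partitionFn_pos hX w).ne'

theorem gibbsExp_const_mul (w : EuclideanSpace ℝ (Fin d)) (r : ℝ)
    (f : EuclideanSpace ℝ (Fin d) → ℝ) :
    gibbsExp X w (fun x => r * f x) = r * gibbsExp X w f := by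
  simp only [gibbsExp, mul_sum]
  exact sum_congr rfl fun _ _ => by ring

theorem gibbsCov_const_mul_left (w : EuclideanSpace ℝ (Fin d)) (r : ℝ)
    (f g : EuclideanSpace ℝ (Fin d) → ℝ) :
    gibbsCov X w (fun x => r * f x) g = r * gibbsCov X w f g := by
  simp only [gibbsCov, mul_assoc, gibbsExp_const_mul]
  ring

theorem gibbsCov_const_mul_right (w : EuclideanSpace ℝ (Fin d)) (r : ℝ)
    (f g : EuclideanSpace ℝ (Fin d) → ℝ) :
    gibbsCov X w f (fun x => r * g x) = r * gibbsCov X w f g := by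
  simp only [gibbsCov, mul_left_comm _ r, gibbsExp_const_mul]
  ring

theorem gibbsExp_inner_smul (w : EuclideanSpace ℝ (Fin d)) (r : ℝ)
    (v : EuclideanSpace ℝ (Fin d)) :
    gibbsExp X w (fun x => ⟪r • v, x⟫_ℝ) = r * gibbsExp X w (fun x => ⟪v, x⟫_ℝ) := by
  simp only [real_inner_smul_left, gibbsExp_const_mul]

theorem gibbsCov_inner_smul_left (w : EuclideanSpace ℝ (Fin d)) (r : ℝ)
    (v : EuclideanSpace ℝ (Fin d)) (g : EuclideanSpace ℝ (Fin d) → ℝ) :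
    gibbsCov X w (fun x => ⟪r • v, x⟫_ℝ) g = r * gibbsCov X w (fun x => ⟪v, x⟫_ℝ) g := by
  simp only [real_inner_smul_left, gibbsCov_const_mul_left]

theorem gibbsCov_inner_smul_right (w : EuclideanSpace ℝ (Fin d)) (r : ℝ)
    (v : EuclideanSpace ℝ (Fin d)) (f : EuclideanSpace ℝ (Fin d) → ℝ) :
    gibbsCov X w f (fun x => ⟪r • v, x⟫_ℝ) = r * gibbsCov X w f (fun x => ⟪v, x⟫_ℝ) := by
  simp only [real_inner_smul_left, gibbsCov_const_mul_right]

theorem gibbsCov_self (w : EuclideanSpace ℝ (Fin d)) (f : EuclideanSpace ℝ (Fin d) → ℝ) :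
    gibbsCov X w f f = gibbsVar X w f := by
  simp only [gibbsCov, gibbsVar, sq]

theorem gibbsVar_eq_sum_sq (hX : X.Nonempty) (w : EuclideanSpace ℝ (Fin d))
    (f : EuclideanSpace ℝ (Fin d) → ℝ) :
    gibbsVar X w f = ∑ x ∈ X, gibbs X w x * (f x - gibbsExp X w f) ^ 2 := by
  rw [sum_mul_sub_sq_of_sum_eq_one (sum_gibbs hX w)]
  simp [gibbsVar, gibbsExp]

theorem gibbsVar_nonneg (hX : X.Nonempty) (w : EuclideanSpace ℝ (Fin d))
    (f : EuclideanSpace ℝ (Fin d) → ℝ) : 0 ≤ gibbsVar X w f := by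
  rw [gibbsVar_eq_sum_sq hX]
  exact sum_nonneg fun x _ => mul_nonneg (gibbs_pos hX w x).le (sq_nonneg _)

theorem gibbsVar_le_sq_of_abs_le (hX : X.Nonempty) (w : EuclideanSpace ℝ (Fin d))
    {f : EuclideanSpace ℝ (Fin d) → ℝ} {M : ℝ} (hf : ∀ x ∈ X, |f x| ≤ M) :
    gibbsVar X w f ≤ M ^ 2 := by
  have hsq : gibbsExp X w (fun x => f x ^ 2) ≤ M ^ 2 := by
    calc ∑ x ∈ X, gibbs X w x * f x ^ 2 ≤ ∑ x ∈ X, gibbs X w x * M ^ 2 :=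
          sum_le_sum fun x hx => mul_le_mul_of_nonneg_left
            (sq_le_sq' (abs_le.1 (hf x hx)).1 (abs_le.1 (hf x hx)).2) (gibbs_pos hX w x).le
      _ = M ^ 2 := by rw [← sum_mul, sum_gibbs hX, one_mul]
  unfold gibbsVar
  nlinarith [sq_nonneg (gibbsExp X w f)]

theorem gibbs_ge_of_abs_inner_le (hX : X.Nonempty) {w : EuclideanSpace ℝ (Fin d)} {r : ℝ}
    (hw : ∀ x ∈ X, |⟪w, x⟫_ℝ| ≤ r) {x : EuclideanSpace ℝ (Fin d)} (hx : x ∈ X) :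
    exp (-(2 * r)) / #X ≤ gibbs X w x := by
  have hnum : exp (-r) ≤ exp ⟪w, x⟫_ℝ := exp_le_exp.2 (abs_le.1 (hw x hx)).1
  have hden : partitionFn X w ≤ #X * exp r := by
    calc partitionFn X w ≤ ∑ _y ∈ X, exp r :=
          sum_le_sum fun y hy => exp_le_exp.2 (abs_le.1 (hw y hy)).2
      _ = #X * exp r := by rw [sum_const, nsmul_eq_mul]
  have hcard : (0 : ℝ) < #X := by exact_mod_cast hX.card_pos
  rw [gibbs_eq, div_le_div_iff₀ hcard (partitionFn_pos hX w)]
  calc exp (-(2 * r)) * partitionFn X w ≤ exp (-(2 * r)) * (#X * exp r) := by gcongr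
    _ = exp (-r) * #X := by rw [mul_left_comm, ← exp_add]; ring_nf
    _ ≤ exp ⟪w, x⟫_ℝ * #X := by gcongr

theorem unifVar_le_sum_sq (hX : X.Nonempty) (f : EuclideanSpace ℝ (Fin d) → ℝ) (m : ℝ) :
    unifVar X f ≤ (#X : ℝ)⁻¹ * ∑ x ∈ X, (f x - m) ^ 2 := by
  have hq : ∑ _x ∈ X, (#X : ℝ)⁻¹ = 1 := by
    rw [sum_const, nsmul_eq_mul, mul_inv_cancel₀ (by exact_mod_cast hX.card_pos.ne')]
  have h := sum_mul_sub_sq_of_sum_eq_one hq f m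
  simp only [← mul_sum] at h
  rw [h, unifVar, unifExp, unifExp]
  exact le_add_of_nonneg_right (sq_nonneg _)

theorem exp_mul_unifVar_le_gibbsVar (hX : X.Nonempty) {w : EuclideanSpace ℝ (Fin d)} {r : ℝ}
    (hw : ∀ x ∈ X, |⟪w, x⟫_ℝ| ≤ r) (f : EuclideanSpace ℝ (Fin d) → ℝ) :
    exp (-(2 * r)) * unifVar X f ≤ gibbsVar X w f := by
  set m := gibbsExp X w f
  calc exp (-(2 * r)) * unifVar X f
      ≤ exp (-(2 * r)) * ((#X : ℝ)⁻¹ * ∑ x ∈ X, (f x - m) ^ 2) :=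
        mul_le_mul_of_nonneg_left (unifVar_le_sum_sq hX f m) (exp_pos _).le
    _ = ∑ x ∈ X, exp (-(2 * r)) / #X * (f x - m) ^ 2 := by
        rw [mul_sum, mul_sum]; exact sum_congr rfl fun _ _ => by ring
    _ ≤ ∑ x ∈ X, gibbs X w x * (f x - m) ^ 2 :=
        sum_le_sum fun x hx => by gcongr; exact gibbs_ge_of_abs_inner_le hX hw hx
    _ = gibbsVar X w f := (gibbsVar_eq_sum_sq hX w f).symm

theorem differentiable_gibbs (hX : X.Nonempty) (x : EuclideanSpace ℝ (Fin d)) :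
    Differentiable ℝ (fun w => gibbs X w x) := by
  have hinner (y : EuclideanSpace ℝ (Fin d)) : Differentiable ℝ (fun w => ⟪w, y⟫_ℝ) :=
    differentiable_id.inner ℝ (differentiable_const y)
  simp only [gibbs_eq, div_eq_mul_inv, partitionFn]
  fun_prop (disch := exact fun w => (partitionFn_pos hX w).ne')

variable {γ : ℝ → EuclideanSpace ℝ (Fin d)} {γ' : EuclideanSpace ℝ (Fin d)} {s : ℝ}

theorem hasDerivAt_inner_comp (hγ : HasDerivAt γ γ' s) (x : EuclideanSpace ℝ (Fin d)) :
    HasDerivAt (fun s => ⟪γ s, x⟫_ℝ) ⟪γ', x⟫_ℝ s := by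
  simpa using hγ.inner ℝ (hasDerivAt_const s x)

theorem hasDerivAt_partitionFn_comp (hγ : HasDerivAt γ γ' s) :
    HasDerivAt (fun s => partitionFn X (γ s)) (∑ y ∈ X, exp ⟪γ s, y⟫_ℝ * ⟪γ', y⟫_ℝ) s :=
  HasDerivAt.fun_sum fun y _ => (hasDerivAt_inner_comp hγ y).exp

theorem gibbsExp_eq_sum_div (w : EuclideanSpace ℝ (Fin d)) (f : EuclideanSpace ℝ (Fin d) → ℝ) :
    gibbsExp X w f = (∑ y ∈ X, exp ⟪w, y⟫_ℝ * f y) / partitionFn X w := by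
  simp only [gibbsExp, gibbs_eq, sum_div, div_mul_eq_mul_div]

theorem hasDerivAt_log_partitionFn_comp (hX : X.Nonempty) (hγ : HasDerivAt γ γ' s) :
    HasDerivAt (fun s => log (partitionFn X (γ s))) (gibbsExp X (γ s) (fun x => ⟪γ', x⟫_ℝ)) s := by
  rw [gibbsExp_eq_sum_div]
  exact (hasDerivAt_partitionFn_comp hγ).log (partitionFn_pos hX _).ne'

theorem hasDerivAt_gibbs_comp (hX : X.Nonempty) (hγ : HasDerivAt γ γ' s)
    (x : EuclideanSpace ℝ (Fin d)) :
    HasDerivAt (fun s => gibbs X (γ s) x)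
      (gibbs X (γ s) x * (⟪γ', x⟫_ℝ - gibbsExp X (γ s) (fun y => ⟪γ', y⟫_ℝ))) s := by
  have hZ := (partitionFn_pos hX (γ s)).ne'
  refine ((hasDerivAt_inner_comp hγ x).exp.div (hasDerivAt_partitionFn_comp hγ) hZ).congr_deriv ?_
  rw [gibbs_eq, gibbsExp_eq_sum_div]
  field_simp

theorem hasDerivAt_gibbsExp_comp (hX : X.Nonempty) (hγ : HasDerivAt γ γ' s)
    {f : ℝ → EuclideanSpace ℝ (Fin d) → ℝ} {f' : EuclideanSpace ℝ (Fin d) → ℝ}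
    (hf : ∀ x ∈ X, HasDerivAt (fun s => f s x) (f' x) s) :
    HasDerivAt (fun s => gibbsExp X (γ s) (f s))
      (gibbsCov X (γ s) (fun x => ⟪γ', x⟫_ℝ) (f s) + gibbsExp X (γ s) f') s := by
  refine (HasDerivAt.fun_sum fun x hx =>
    (hasDerivAt_gibbs_comp hX hγ x).mul (hf x hx)).congr_deriv ?_
  set m := gibbsExp X (γ s) (fun y => ⟪γ', y⟫_ℝ)
  have hsplit : ∀ x ∈ X, gibbs X (γ s) x * (⟪γ', x⟫_ℝ - m) * f s x + gibbs X (γ s) x * f' x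
      = gibbs X (γ s) x * (⟪γ', x⟫_ℝ * f s x) - m * (gibbs X (γ s) x * f s x)
        + gibbs X (γ s) x * f' x :=
    fun _ _ => by ring
  rw [sum_congr rfl hsplit, sum_add_distrib, sum_sub_distrib, ← mul_sum]
  rfl

theorem negEnt_eq (hX : X.Nonempty) (w : EuclideanSpace ℝ (Fin d)) :
    negEnt X w = gibbsExp X w (fun x => ⟪w, x⟫_ℝ) - log (partitionFn X w) := by
  have hlog : ∀ x ∈ X, log (gibbs X w x) = ⟪w, x⟫_ℝ - log (partitionFn X w) := fun x _ => by
    rw [gibbs_eq, log_div (exp_ne_zero _) (partitionFn_pos hX w).ne', log_exp]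
  rw [negEnt, sum_congr rfl fun x hx => congrArg (gibbs X w x * ·) (hlog x hx)]
  simp only [mul_sub, sum_sub_distrib, ← sum_mul, sum_gibbs hX, one_mul, gibbsExp]

def gibbsLoss (X : Finset (EuclideanSpace ℝ (Fin d))) (lam κ : ℝ) (c w : EuclideanSpace ℝ (Fin d)) :
    ℝ :=
  gibbsExp X (κ • w) (fun x => ⟪c, x⟫_ℝ) + lam / κ * negEnt X (κ • w)

theorem rloss_eq_gibbsLoss (β ρ lam : ℝ) (c w : EuclideanSpace ℝ (Fin d)) :
    rloss X β ρ lam c w = (1 - β) * gibbsLoss X lam 1 c w + β * gibbsLoss X lam ρ c w := by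
  simp only [rloss, pmix, reg, gibbsLoss, gibbsExp, one_smul, div_one, add_mul, sum_add_distrib,
    mul_assoc, ← mul_sum]
  ring

-- In this form the `E[⟪γ', x⟫]` terms coming from the expectation and from `log Z` cancel
-- in the derivative, leaving a single covariance.
theorem gibbsLoss_eq (hX : X.Nonempty) (lam : ℝ) {κ : ℝ} (hκ : κ ≠ 0)
    (c w : EuclideanSpace ℝ (Fin d)) :
    gibbsLoss X lam κ c w
      = gibbsExp X (κ • w) (fun x => ⟪c + lam • w, x⟫_ℝ)
        - lam / κ * log (partitionFn X (κ • w)) := by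
  have hlin : ∀ x, ⟪c + lam • w, x⟫_ℝ = ⟪c, x⟫_ℝ + lam / κ * ⟪κ • w, x⟫_ℝ := fun x => by
    rw [inner_add_left, real_inner_smul_left, real_inner_smul_left]
    field_simp
  simp only [gibbsLoss, negEnt_eq hX, hlin, mul_sub, gibbsExp, mul_add, sum_add_distrib,
    mul_left_comm _ (lam / κ), ← mul_sum]
  ring

theorem hasDerivAt_gibbsLoss_comp (hX : X.Nonempty) (lam : ℝ) {κ : ℝ} (hκ : κ ≠ 0)
    (c : EuclideanSpace ℝ (Fin d)) (hγ : HasDerivAt γ γ' s) :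
    HasDerivAt (fun s => gibbsLoss X lam κ c (γ s))
      (κ * gibbsCov X (κ • γ s) (fun x => ⟪γ', x⟫_ℝ) (fun x => ⟪c + lam • γ s, x⟫_ℝ)) s := by
  have hκγ : HasDerivAt (fun s => κ • γ s) (κ • γ') s := hγ.const_smul κ
  have hcγ : HasDerivAt (fun s => c + lam • γ s) (lam • γ') s := (hγ.const_smul lam).const_add c
  simp only [gibbsLoss_eq hX lam hκ]
  refine ((hasDerivAt_gibbsExp_comp hX hκγ fun x _ => hasDerivAt_inner_comp hcγ x).sub
    ((hasDerivAt_log_partitionFn_comp hX hκγ).const_mul (lam / κ))).congr_deriv ?_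
  rw [gibbsCov_inner_smul_left, gibbsExp_inner_smul, gibbsExp_inner_smul]
  field_simp
  ring

theorem differentiable_rloss (hX : X.Nonempty) (β ρ lam : ℝ) (c : EuclideanSpace ℝ (Fin d)) :
    Differentiable ℝ (rloss X β ρ lam c) := by
  have := differentiable_gibbs hX
  unfold rloss pmix reg negEnt
  fun_prop (disch := exact fun w => (gibbs_pos hX _ _).ne')

theorem hasDerivAt_rloss_comp (hX : X.Nonempty) (β : ℝ) {ρ : ℝ} (hρ : ρ ≠ 0) (lam : ℝ)
    (c : EuclideanSpace ℝ (Fin d)) (hγ : HasDerivAt γ γ' s) :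
    HasDerivAt (fun s => rloss X β ρ lam c (γ s))
      ((1 - β) * gibbsCov X (γ s) (fun x => ⟪γ', x⟫_ℝ) (fun x => ⟪c + lam • γ s, x⟫_ℝ)
        + β * ρ * gibbsCov X (ρ • γ s) (fun x => ⟪γ', x⟫_ℝ) (fun x => ⟪c + lam • γ s, x⟫_ℝ)) s := by
  simp only [rloss_eq_gibbsLoss]
  refine (((hasDerivAt_gibbsLoss_comp hX lam one_ne_zero c hγ).const_mul (1 - β)).add
    ((hasDerivAt_gibbsLoss_comp hX lam hρ c hγ).const_mul β)).congr_deriv ?_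
  rw [one_smul]
  ring

def mixedVar (X : Finset (EuclideanSpace ℝ (Fin d))) (β ρ : ℝ) (w v : EuclideanSpace ℝ (Fin d)) :
    ℝ :=
  (1 - β) * gibbsVar X w (fun x => ⟪v, x⟫_ℝ) + β * ρ * gibbsVar X (ρ • w) (fun x => ⟪v, x⟫_ℝ)

theorem hasDerivAt_rloss_segment (hX : X.Nonempty) (β : ℝ) {ρ lam : ℝ} (hρ : ρ ≠ 0)
    (hlam : lam ≠ 0) (c v : EuclideanSpace ℝ (Fin d)) (s : ℝ) :
    HasDerivAt (fun s => rloss X β ρ lam c (-(lam⁻¹ • c) + s • v))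
      (lam * s * mixedVar X β ρ (-(lam⁻¹ • c) + s • v) v) s := by
  have hc : c + lam • (-(lam⁻¹ • c) + s • v) = (lam * s) • v := by
    rw [smul_add, smul_neg, smul_smul, mul_inv_cancel₀ hlam, one_smul, smul_smul]
    abel
  refine (hasDerivAt_rloss_comp hX β hρ lam c (hasDerivAt_line _ v s)).congr_deriv ?_
  rw [hc, gibbsCov_inner_smul_right, gibbsCov_inner_smul_right, gibbsCov_self, gibbsCov_self,
    mixedVar]
  ring

theorem mixedVar_nonneg (hX : X.Nonempty) {β ρ : ℝ} (hβ0 : 0 ≤ β) (hβ1 : β ≤ 1) (hρ : 0 ≤ ρ)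
    (w v : EuclideanSpace ℝ (Fin d)) : 0 ≤ mixedVar X β ρ w v := by
  have := gibbsVar_nonneg hX w (fun x => ⟪v, x⟫_ℝ)
  have := gibbsVar_nonneg hX (ρ • w) (fun x => ⟪v, x⟫_ℝ)
  unfold mixedVar
  have : 0 ≤ 1 - β := sub_nonneg.2 hβ1
  positivity

theorem abs_inner_le_norm_mul {D : ℝ} (hD : ∀ x ∈ X, ‖x‖ ≤ D) (v : EuclideanSpace ℝ (Fin d))
    {x : EuclideanSpace ℝ (Fin d)} (hx : x ∈ X) : |⟪v, x⟫_ℝ| ≤ ‖v‖ * D :=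
  (abs_real_inner_le_norm v x).trans (mul_le_mul_of_nonneg_left (hD x hx) (norm_nonneg v))

theorem mixedVar_le (hX : X.Nonempty) {β ρ : ℝ} (hβ0 : 0 ≤ β) (hβ1 : β ≤ 1) (hρ1 : ρ ≤ 1)
    {D : ℝ} (hD : ∀ x ∈ X, ‖x‖ ≤ D) (w v : EuclideanSpace ℝ (Fin d)) :
    mixedVar X β ρ w v ≤ (‖v‖ * D) ^ 2 := by
  have h1 := gibbsVar_le_sq_of_abs_le hX w fun x hx => abs_inner_le_norm_mul hD v hx
  have h2 := gibbsVar_le_sq_of_abs_le hX (ρ • w) fun x hx => abs_inner_le_norm_mul hD v hx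
  have h3 := gibbsVar_nonneg hX (ρ • w) (fun x => ⟪v, x⟫_ℝ)
  unfold mixedVar
  have : β * ρ * gibbsVar X (ρ • w) (fun x => ⟪v, x⟫_ℝ) ≤ β * (‖v‖ * D) ^ 2 := by
    rw [mul_assoc]
    exact mul_le_mul_of_nonneg_left ((mul_le_of_le_one_left h3 hρ1).trans h2) hβ0
  nlinarith

theorem rloss_sub_rloss_le (hX : X.Nonempty) {β ρ lam : ℝ} (hβ0 : 0 ≤ β) (hβ1 : β ≤ 1)
    (hρ0 : 0 < ρ) (hρ1 : ρ ≤ 1) (hlam : 0 < lam) {D : ℝ} (hD : ∀ x ∈ X, ‖x‖ ≤ D)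
    (c v : EuclideanSpace ℝ (Fin d)) :
    rloss X β ρ lam c (-(lam⁻¹ • c) + v) - rloss X β ρ lam c (-(lam⁻¹ • c))
      ≤ lam * (‖v‖ * D) ^ 2 := by
  have hderiv := hasDerivAt_rloss_segment hX β hρ0.ne' hlam.ne' c v
  obtain ⟨s, ⟨hs0, hs1⟩, hs⟩ := exists_hasDerivAt_eq_slope _ _ zero_lt_one
    (fun s _ => (hderiv s).continuousAt.continuousWithinAt) (fun s _ => hderiv s)
  rw [one_smul, zero_smul, add_zero, sub_zero, div_one] at hs
  rw [← hs, mul_assoc]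
  refine mul_le_mul_of_nonneg_left ((mul_le_of_le_one_left ?_ hs1.le).trans ?_) hlam.le
  · exact mixedVar_nonneg hX hβ0 hβ1 hρ0.le _ v
  · exact mixedVar_le hX hβ0 hβ1 hρ1 hD _ v

theorem mul_le_mixedVar (hX : X.Nonempty) {β ρ a : ℝ} (hβ0 : 0 ≤ β) (hβ1 : β ≤ 1) (hρ : 0 ≤ ρ)
    {w v : EuclideanSpace ℝ (Fin d)} (ha : a ≤ gibbsVar X (ρ • w) (fun x => ⟪v, x⟫_ℝ)) :
    β * ρ * a ≤ mixedVar X β ρ w v := by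
  have := mul_nonneg (sub_nonneg.2 hβ1) (gibbsVar_nonneg hX w (fun x => ⟪v, x⟫_ℝ))
  have := mul_le_mul_of_nonneg_left ha (mul_nonneg hβ0 hρ)
  unfold mixedVar
  linarith

theorem div_four_le_gibbsVar (hX : X.Nonempty) {w : EuclideanSpace ℝ (Fin d)}
    (hw : ∀ x ∈ X, |⟪w, x⟫_ℝ| ≤ 1 / 2) {f : EuclideanSpace ℝ (Fin d) → ℝ} {a : ℝ} (ha : 0 ≤ a)
    (hf : a ≤ unifVar X f) : a / 4 ≤ gibbsVar X w f := by
  have h := exp_mul_unifVar_le_gibbsVar hX hw f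
  have he : (1 / 4 : ℝ) ≤ exp (-(2 * (1 / 2))) := by
    norm_num
    linarith [exp_neg_one_gt_d9]
  nlinarith

end Gibbs

theorem rloss_quasar_convex_general {d : ℕ}
    (X : Finset (EuclideanSpace ℝ (Fin d))) (hX : X.Nonempty)
    (D : ℝ) (hDpos : 0 < D) (hD : ∀ x ∈ X, ‖x‖ ≤ D)
    (β ρ : ℝ) (hβ : β ∈ Set.Ioo (0 : ℝ) 1) (hρ : ρ ∈ Set.Ioo (0 : ℝ) 1)
    (c : EuclideanSpace ℝ (Fin d)) (lam : ℝ) (hlam : 0 < lam)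
    (α : ℝ) (hα : 0 < α)
    (hvar : ∀ v : EuclideanSpace ℝ (Fin d),
      unifVar X (fun x => ⟪v, x⟫_ℝ) ≥ α * ‖v‖ ^ 2)
    (B : ℝ)
    (hρsmall : ρ ≤ min (1 / (2 * B * D)) (α / (12 * B * D ^ 3))) :
    ∀ w ∈ Metric.closedBall (0 : EuclideanSpace ℝ (Fin d)) B,
      ⟪gradient (rloss X β ρ lam c) w, w + lam⁻¹ • c⟫_ℝ
        ≥ (β * ρ * α / (4 * D ^ 2))
            * (rloss X β ρ lam c w - rloss X β ρ lam c (-(lam⁻¹ • c))) := by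
  intro w hw
  obtain ⟨hβ0, hβ1⟩ := hβ
  obtain ⟨hρ0, hρ1⟩ := hρ
  set v := w + lam⁻¹ • c
  have hw_eq : -(lam⁻¹ • c) + v = w := by simp [v]
  have hgrad : ⟪gradient (rloss X β ρ lam c) w, v⟫_ℝ = lam * mixedVar X β ρ w v := by
    have h := inner_gradient_eq_of_hasDerivAt_comp (hasDerivAt_line _ v 1)
      (differentiable_rloss hX β ρ lam c _) (hasDerivAt_rloss_segment hX β hρ0.ne' hlam.ne' c v 1)
    rwa [one_smul, hw_eq, mul_one] at h
  have hgap := rloss_sub_rloss_le hX hβ0.le hβ1.le hρ0 hρ1.le hlam hD c v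
  rw [hw_eq] at hgap
  have hwB : ‖w‖ ≤ B := by simpa using hw
  have hρBD : ρ * B * D ≤ 1 / 2 := by
    have hρ' := hρsmall.trans (min_le_left _ _)
    have hBD : 0 < 2 * B * D := by
      by_contra! h
      linarith [hρ'.trans (one_div_nonpos.2 h)]
    linarith [(le_div_iff₀ hBD).1 hρ']
  have hnear (x) (hx : x ∈ X) : |⟪ρ • w, x⟫_ℝ| ≤ 1 / 2 := by
    refine (abs_inner_le_norm_mul hD _ hx).trans (hρBD.trans' ?_)
    rw [norm_smul, norm_of_nonneg hρ0.le]
    gcongr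
  have hslow := div_four_le_gibbsVar hX hnear (by positivity) (hvar v)
  rw [ge_iff_le, hgrad]
  calc β * ρ * α / (4 * D ^ 2) * (rloss X β ρ lam c w - rloss X β ρ lam c (-(lam⁻¹ • c)))
      ≤ β * ρ * α / (4 * D ^ 2) * (lam * (‖v‖ * D) ^ 2) := by gcongr
    _ = lam * (β * ρ * (α * ‖v‖ ^ 2 / 4)) := by field_simp
    _ ≤ lam * mixedVar X β ρ w v := by gcongr; exact mul_le_mixedVar hX hβ0.le hβ1.le hρ0.le hslow

/-- If `Var_{x∼U(X)}[v·x] ≥ α‖v‖₂²` for every `v`, `‖c‖₂ ≤ C₁`,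
`Z` is the closed ball of radius `B = 2C₁/λ` about the origin, and
`0 < ρ ≤ min{1/(2BD), α/(12BD³)}`, then `L_λ` is `γ`-quasar-convex with respect to `−c/λ`
on `Z` with `γ = βρα/(4D²)`: for every `w ∈ Z`,
`∇L_λ(w)·(w + c/λ) ≥ (βρα/(4D²))·(L_λ(w) − L_λ(−c/λ))`. -/
theorem rloss_quasar_convex {d : ℕ} (hd : 1 ≤ d)
    (X : Finset (EuclideanSpace ℝ (Fin d))) (hX : X.Nonempty)
    (D : ℝ) (hDpos : 0 < D) (hD : ∀ x ∈ X, ‖x‖ ≤ D)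
    (β ρ : ℝ) (hβ : β ∈ Set.Ioo (0 : ℝ) 1) (hρ : ρ ∈ Set.Ioo (0 : ℝ) 1)
    (c : EuclideanSpace ℝ (Fin d)) (lam : ℝ) (hlam : 0 < lam)
    (α : ℝ) (hα : 0 < α)
    (hvar : ∀ v : EuclideanSpace ℝ (Fin d),
      unifVar X (fun x => ⟪v, x⟫_ℝ) ≥ α * ‖v‖ ^ 2)
    (C₁ : ℝ) (hc : ‖c‖ ≤ C₁)
    (B : ℝ) (hB : B = 2 * C₁ / lam)
    (hρsmall : ρ ≤ min (1 / (2 * B * D)) (α / (12 * B * D ^ 3))) :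
    ∀ w ∈ Metric.closedBall (0 : EuclideanSpace ℝ (Fin d)) B,
      ⟪gradient (rloss X β ρ lam c) w, w + lam⁻¹ • c⟫_ℝ
        ≥ (β * ρ * α / (4 * D ^ 2))
            * (rloss X β ρ lam c w - rloss X β ρ lam c (-(lam⁻¹ • c))) :=
  rloss_quasar_convex_general X hX D hDpos hD β ρ hβ hρ c lam hlam α hα hvar B hρsmall
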